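/- arXiv:2102.01056 — 2 statements merged into one kernel-verified Lean document; each statement's English description precedes it below -/
import Mathlib

section
/- Let a < 0 be an integer and y(q) the formal power series solution of y(y+1)^a = q with y(0)=0. Then 1/(1+y(q)) = B_{-a}(q)^{-1}, where B_b(q) = Σ_{n≥0} C_{n,b} q^n is the generating series of Fuss-Catalan numbers. -/
open PowerSeries

/-- The Fuss–Catalan numbers `C_{n,b} = (1/(bn+1)) * choose (bn+1) n` as rationals. -/
noncomputable def fussCatalan (n b : ℕ) : ℚ :=
  (1 / (b * n + 1 : ℚ)) * (Nat.choose (b * n + 1) n : ℚ)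

/-- The generating series `B_b(q) = Σ_{n≥0} C_{n,b} q^n` of Fuss–Catalan numbers. -/
noncomputable def fussCatalanSeries (b : ℕ) : PowerSeries ℚ :=
  PowerSeries.mk fun n => fussCatalan n b

/-!
The series `F_x = Σ_n x/(x+bn) * choose (x+bn) n * X^n` of Raney numbers satisfy the Pascal-type
recurrence `F_{x+1} = F_x + X * F_{x+b}` with `F_0 = 1`. Both `x ↦ F_x * F_y` and `x ↦ F_{x+y}`
obey it, and a family obeying it is determined by its value at `0` (compare coefficients by
induction on the degree, then on `x`), so `F_x = F_1 ^ x`. Reading off coefficients,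
`B_b = F_1 = 1 + X * F_b = 1 + X * B_b ^ b`, i.e. `B_b - 1` solves `y = X * (1 + y) ^ b`, and this
equation has a unique solution: the difference `d` of two solutions satisfies `d = X * s * d`,
and `1 - X * s` is a unit.
-/

namespace PowerSeries

variable {R : Type*} [CommRing R]

theorem eq_zero_of_succ_eq_add_X_mul {P : ℕ → R⟦X⟧} (b : ℕ) (h0 : P 0 = 0)
    (hs : ∀ x, P (x + 1) = P x + X * P (x + b)) (x : ℕ) : P x = 0 := by
  have hdvd : ∀ n x, X ^ n ∣ P x := by
    intro n
    induction n with
    | zero => simp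
    | succ n ihn =>
      intro x
      induction x with
      | zero => simp [h0]
      | succ x ihx =>
        rw [hs]
        exact dvd_add ihx (by rw [pow_succ']; exact mul_dvd_mul_left X (ihn _))
  ext n
  exact X_pow_dvd_iff.mp (hdvd (n + 1) x) n n.lt_succ_self

theorem eq_of_eq_X_mul_one_add_pow {y z : R⟦X⟧} {b : ℕ} (hy : y = X * (1 + y) ^ b)
    (hz : z = X * (1 + z) ^ b) : y = z := by
  obtain ⟨s, hs⟩ := sub_dvd_pow_sub_pow (1 + y) (1 + z) b
  have hunit : IsUnit (1 - X * s) := by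
    rw [isUnit_iff_constantCoeff]
    simp
  have hker : (y - z) * (1 - X * s) = 0 := by
    linear_combination hy - hz + X * hs
  exact sub_eq_zero.mp (hunit.mul_left_eq_zero.mp hker)

end PowerSeries

-- The branch `n = 0` only matters at `x = 0`, where the formula would read `0 / 0`.
noncomputable def raney (b x n : ℕ) : ℚ :=
  if n = 0 then 1 else (x : ℚ) / (x + b * n : ℕ) * (x + b * n).choose n

noncomputable def raneySeries (b x : ℕ) : ℚ⟦X⟧ :=
  mk (raney b x)

section Raney

variable {b : ℕ}

theorem raney_eq {x n : ℕ} (h : x + b * n ≠ 0) :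
    raney b x n = (x : ℚ) / (x + b * n : ℕ) * (x + b * n).choose n := by
  rcases eq_or_ne n 0 with rfl | hn
  · have hx : (x : ℚ) ≠ 0 := by simpa using h
    simp [raney, hx]
  · simp [raney, hn]

theorem raney_succ_succ (hb : 0 < b) (x n : ℕ) :
    raney b (x + 1) (n + 1) = raney b x (n + 1) + raney b (x + b) n := by
  set m := x + b * (n + 1) with hm
  have hnm : n ≤ m := by nlinarith
  rw [raney_eq (x := x + 1) (by omega), raney_eq (x := x) (by positivity),
    raney_eq (x := x + b) (by omega), show x + 1 + b * (n + 1) = m + 1 by ring,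
    show x + b + b * n = m by ring]
  have hsucc : ((m + 1).choose (n + 1) : ℚ) = (m + 1) * m.choose n / (n + 1) := by
    rw [eq_div_iff (by positivity)]
    exact_mod_cast (Nat.add_one_mul_choose_eq m n).symm
  have hright : (m.choose (n + 1) : ℚ) = m.choose n * (m - n : ℕ) / (n + 1) := by
    rw [eq_div_iff (by positivity)]
    exact_mod_cast Nat.choose_succ_right_eq m n
  have hm0 : (m : ℚ) ≠ 0 := by positivity
  rw [hsucc, hright, Nat.cast_sub hnm]
  push_cast
  field_simp
  rw [hm]
  push_cast
  ring

theorem raney_one_succ (hb : 0 < b) (n : ℕ) : raney b 1 (n + 1) = raney b b n := by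
  rw [raney_eq (by omega), raney_eq (by positivity), add_comm 1,
    show b + b * n = b * (n + 1) by ring]
  have hsucc := congrArg (Nat.cast : ℕ → ℚ) (Nat.add_one_mul_choose_eq (b * (n + 1)) n)
  rw [div_mul_eq_mul_div, div_mul_eq_mul_div, div_eq_div_iff (by positivity) (by positivity)]
  push_cast at hsucc ⊢
  linear_combination -(b : ℚ) * hsucc

theorem fussCatalan_eq_raney (n : ℕ) : fussCatalan n b = raney b 1 n := by
  rw [fussCatalan, raney_eq (by omega), add_comm 1]
  push_cast
  ring

theorem raneySeries_zero : raneySeries b 0 = 1 := by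
  ext n
  cases n <;> simp [raneySeries, raney]

theorem raneySeries_succ (hb : 0 < b) (x : ℕ) :
    raneySeries b (x + 1) = raneySeries b x + X * raneySeries b (x + b) := by
  ext n
  cases n with
  | zero => simp [raneySeries, raney]
  | succ n => simp [raneySeries, coeff_succ_X_mul, raney_succ_succ hb]

theorem raneySeries_add (hb : 0 < b) (x y : ℕ) :
    raneySeries b (x + y) = raneySeries b x * raneySeries b y := by
  have hprod : ∀ x, raneySeries b x * raneySeries b y - raneySeries b (x + y) = 0 :=
    eq_zero_of_succ_eq_add_X_mul b (by simp [raneySeries_zero]) fun x => by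
      rw [raneySeries_succ hb, add_right_comm, raneySeries_succ hb, add_right_comm x b]
      ring
  exact (sub_eq_zero.mp (hprod x)).symm

theorem raneySeries_eq_pow (hb : 0 < b) (x : ℕ) : raneySeries b x = raneySeries b 1 ^ x := by
  induction x with
  | zero => simp [raneySeries_zero]
  | succ x ih => rw [raneySeries_add hb, ih, pow_succ]

theorem raneySeries_one (hb : 0 < b) : raneySeries b 1 = 1 + X * raneySeries b b := by
  ext n
  cases n with
  | zero => simp [raneySeries, raney]
  | succ n => simp [raneySeries, coeff_succ_X_mul, raney_one_succ hb]

theorem fussCatalanSeries_eq_raneySeries : fussCatalanSeries b = raneySeries b 1 := by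
  ext n
  simp [fussCatalanSeries, raneySeries, fussCatalan_eq_raney]

theorem fussCatalanSeries_eq_one_add_X_mul_pow (hb : 0 < b) :
    fussCatalanSeries b = 1 + X * fussCatalanSeries b ^ b := by
  rw [fussCatalanSeries_eq_raneySeries, ← raneySeries_eq_pow hb, raneySeries_one hb]

end Raney

theorem fussCatalan_lagrange_neg_general (a : ℤ) (ha : a < 0) (y : PowerSeries ℚ)
    (hy : y = X * (1 + y) ^ (-a).toNat) :
    (1 + y)⁻¹ = (fussCatalanSeries (-a).toNat)⁻¹ := by
  set B := fussCatalanSeries (-a).toNat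
  have hB : B = 1 + X * B ^ (-a).toNat := fussCatalanSeries_eq_one_add_X_mul_pow (by omega)
  have hBy : y = B - 1 :=
    eq_of_eq_X_mul_one_add_pow hy (by rw [add_sub_cancel]; exact sub_eq_iff_eq_add'.mpr hB)
  rw [hBy, add_sub_cancel]

/-- For an integer `a < 0`, if `y(q)` is the formal power series solution with `y(0) = 0` of
`y(y+1)^a = q`, interpreted as `y = q·(1+y)^{-a}`, then `1/(1+y(q)) = B_{-a}(q)^{-1}`. -/
theorem fussCatalan_lagrange_neg (a : ℤ) (ha : a < 0) (y : PowerSeries ℚ)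
    (h0 : constantCoeff y = 0) (hy : y = X * (1 + y) ^ (-a).toNat) :
    (1 + y)⁻¹ = (fussCatalanSeries (-a).toNat)⁻¹ :=
  fussCatalan_lagrange_neg_general a ha y hy
end

section
/- Classical Lagrange inversion: if h(x) is the unique formal power series with h(0)=0 satisfying h(x) = x·Q(h(x)) for Q a power series with invertible constant term, then for any power series φ with φ(0)=0 and all n>0: [x^n] φ(h(x)) = (1/n)·[t^{n-1}](φ'(t)·Q(t)^n). -/
/-!
Write `h = X u` with `u = Q(h)` a unit. Since `n [xⁿ] φ(h) = [xⁿ⁻¹] (φ(h))'` and, by the chain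
rule, `(φ(h))' = φ'(h) h'`, it suffices to show `[xᵐ] (F(h) h') = [xᵐ] (F Q ^ (m + 1))` for every
`F`. Writing `F(h) = (F Q ^ (m + 1))(h) · u⁻¹ ^ (m + 1)`, this is the invariance of the formal
residue under the substitution `x ↦ h`, which in turn reduces to the residues of
`(X u)⁻¹ ^ (b + 1) (X u)'`: `1` for `b = 0`, and `0` for `b ≥ 1`, where the integrand is
essentially a derivative.
-/

open PowerSeries

/-- Composition of formal power series (substitution of `g`, with `g(0)=0`, into `f`). -/
noncomputable def pcomp {R : Type*} [CommRing R] (f g : PowerSeries R) : PowerSeries R :=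
  PowerSeries.mk fun n => ∑ k ∈ Finset.range (n + 1),
    PowerSeries.coeff (R := R) k f * PowerSeries.coeff (R := R) n (g ^ k)

open Finset

namespace PowerSeries

variable {R : Type*} [CommRing R]

theorem coeff_pow_eq_zero_of_lt {h : R⟦X⟧} (h0 : constantCoeff h = 0) {m c : ℕ} (hmc : m < c) :
    coeff m (h ^ c) = 0 :=
  X_pow_dvd_iff.mp (pow_dvd_pow_of_dvd (X_dvd_iff.mpr h0) c) m hmc

theorem coeff_subst_eq_sum_range {h : R⟦X⟧} (h0 : constantCoeff h = 0) (f : R⟦X⟧) {m N : ℕ}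
    (hmN : m < N) : coeff m (f.subst h) = ∑ c ∈ range N, coeff c f * coeff m (h ^ c) := by
  rw [coeff_subst' (HasSubst.of_constantCoeff_zero' h0)]
  refine finsum_eq_sum_of_support_subset _ fun c hc => ?_
  by_contra hcN
  rw [mem_coe, mem_range, not_lt] at hcN
  exact hc (by simp only [coeff_pow_eq_zero_of_lt h0 (hmN.trans_le hcN), smul_zero])

theorem constantCoeff_subst_of_constantCoeff_eq_zero {h : R⟦X⟧} (h0 : constantCoeff h = 0)
    (f : R⟦X⟧) : constantCoeff (f.subst h) = constantCoeff f := by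
  simpa using coeff_subst_eq_sum_range h0 f zero_lt_one

theorem coeff_subst_mul {h : R⟦X⟧} (h0 : constantCoeff h = 0) (f v : R⟦X⟧) (m : ℕ) :
    coeff m (f.subst h * v) = ∑ c ∈ range (m + 1), coeff c f * coeff m (h ^ c * v) := by
  simp_rw [coeff_mul, mul_sum]
  rw [sum_comm]
  refine sum_congr rfl fun p hp => ?_
  rw [coeff_subst_eq_sum_range h0 f (Nat.antidiagonal.fst_lt hp), sum_mul]
  exact sum_congr rfl fun c _ => mul_assoc _ _ _

/-- The left side is the residue of `(X u)⁻¹ ^ (b + 1) (X u)'`. For `b ≥ 1` this integrand is the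
derivative `-(1 / b) ((X u)⁻¹ ^ b)'`, whose residue vanishes. -/
theorem coeff_inv_pow_succ_mul_derivative_X_mul [IsAddTorsionFree R] (u : R⟦X⟧ˣ) (b : ℕ) :
    coeff b ((↑u⁻¹ : R⟦X⟧) ^ (b + 1) * d⁄dX R (X * (u : R⟦X⟧))) = if b = 0 then 1 else 0 := by
  set w : R⟦X⟧ := ↑u⁻¹
  have hwu : w * u = 1 := u.inv_mul
  have expand : w ^ (b + 1) * d⁄dX R (X * (u : R⟦X⟧)) = w ^ b + X * (w ^ (b + 1) * d⁄dX R u) := by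
    rw [Derivation.leibniz, derivative_X, smul_eq_mul, smul_eq_mul]
    linear_combination (w ^ b) * hwu
  rw [expand, map_add]
  cases b with
  | zero => simp
  | succ m =>
    rw [if_neg m.succ_ne_zero, coeff_succ_X_mul]
    have hd : d⁄dX R (w ^ (m + 1)) = -((m + 1 : ℕ) • (w ^ (m + 2) * d⁄dX R u)) := by
      rw [derivative_pow, derivative_inv]
      push_cast
      ring
    have hcoeff := coeff_derivative (w ^ (m + 1)) m
    rw [hd, map_neg, map_nsmul, nsmul_eq_mul] at hcoeff
    apply IsAddTorsionFree.nsmul_right_injective m.succ_ne_zero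
    dsimp only
    rw [smul_zero, nsmul_eq_mul]
    push_cast at hcoeff ⊢
    linear_combination -hcoeff

/-- Change of variables `x ↦ h` in a residue:
`res (G(h) h' / h ^ (m + 1)) = res (G / X ^ (m + 1))`. -/
theorem coeff_subst_mul_inv_pow_mul_derivative [IsAddTorsionFree R] {h : R⟦X⟧} (u : R⟦X⟧ˣ)
    (hh : h = X * (u : R⟦X⟧)) (g : R⟦X⟧) (m : ℕ) :
    coeff m (g.subst h * ((↑u⁻¹ : R⟦X⟧) ^ (m + 1) * d⁄dX R h)) = coeff m g := by
  have h0 : constantCoeff h = 0 := by simp [hh]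
  have term : ∀ c ∈ range (m + 1),
      coeff m (h ^ c * ((↑u⁻¹ : R⟦X⟧) ^ (m + 1) * d⁄dX R h)) = if c = m then 1 else 0 := by
    intro c hc
    obtain ⟨b, rfl⟩ := Nat.exists_eq_add_of_le (Nat.le_of_lt_succ (mem_range.mp hc))
    have hsplit : h ^ c * ((↑u⁻¹ : R⟦X⟧) ^ (c + b + 1) * d⁄dX R h) =
        X ^ c * ((↑u⁻¹ : R⟦X⟧) ^ (b + 1) * d⁄dX R (X * (u : R⟦X⟧))) := by
      rw [hh, mul_pow, add_assoc, pow_add, ← mul_assoc, ← mul_assoc, mul_assoc _ _ (_ ^ c),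
        ← mul_pow, u.mul_inv, one_pow, mul_one, mul_assoc]
    rw [hsplit, coeff_X_pow_mul', if_pos (Nat.le_add_right c b), Nat.add_sub_cancel_left,
      coeff_inv_pow_succ_mul_derivative_X_mul]
    simp
  rw [coeff_subst_mul h0, sum_congr rfl fun c hc => by rw [term c hc]]
  simp

theorem coeff_subst_mul_derivative_of_eq_X_mul_subst [IsAddTorsionFree R] {Q h : R⟦X⟧}
    (hQ : IsUnit (constantCoeff Q)) (hh : h = X * Q.subst h) (f : R⟦X⟧) (m : ℕ) :
    coeff m (f.subst h * d⁄dX R h) = coeff m (f * Q ^ (m + 1)) := by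
  have h0 : constantCoeff h = 0 := by rw [hh, map_mul, constantCoeff_X, zero_mul]
  have hS := HasSubst.of_constantCoeff_zero' h0
  obtain ⟨u, hu⟩ : IsUnit (Q.subst h) := by
    rw [isUnit_iff_constantCoeff, constantCoeff_subst_of_constantCoeff_eq_zero h0]
    exact hQ
  rw [← hu] at hh
  calc coeff m (f.subst h * d⁄dX R h)
      = coeff m ((f * Q ^ (m + 1)).subst h * ((↑u⁻¹ : R⟦X⟧) ^ (m + 1) * d⁄dX R h)) := by
        rw [subst_mul hS, subst_pow hS, ← hu, mul_assoc, ← mul_assoc (_ ^ _), ← mul_pow,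
          u.mul_inv, one_pow, one_mul]
    _ = coeff m (f * Q ^ (m + 1)) := coeff_subst_mul_inv_pow_mul_derivative u hh _ m

end PowerSeries

theorem pcomp_eq_subst {R : Type*} [CommRing R] {f h : R⟦X⟧} (h0 : constantCoeff h = 0) :
    pcomp f h = f.subst h := by
  ext m
  rw [pcomp, coeff_mk, coeff_subst_eq_sum_range h0 f m.lt_succ_self]

theorem lagrange_inversion_general {R : Type*} [CommRing R] [Algebra ℚ R]
    (Q φ h : PowerSeries R) (hQ : IsUnit (constantCoeff (R := R) Q))
    (h0 : constantCoeff (R := R) h = 0) (hh : h = X * pcomp Q h) :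
    ∀ n : ℕ, 0 < n →
      coeff (R := R) n (pcomp φ h) =
        ((n : ℚ)⁻¹) • coeff (R := R) (n - 1) (PowerSeries.derivativeFun φ * Q ^ n) := by
  have : IsAddTorsionFree R := .of_module_rat R
  intro n hn
  obtain ⟨m, rfl⟩ := Nat.exists_eq_add_one_of_ne_zero hn.ne'
  rw [pcomp_eq_subst h0] at hh ⊢
  have hscaled :
      ((m + 1 : ℕ) : ℚ) • coeff (m + 1) (φ.subst h) = coeff m (d⁄dX R φ * Q ^ (m + 1)) := by
    rw [Nat.cast_smul_eq_nsmul, nsmul_eq_mul, mul_comm, Nat.cast_succ, ← coeff_derivative,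
      derivative_subst (HasSubst.of_constantCoeff_zero' h0),
      coeff_subst_mul_derivative_of_eq_X_mul_subst hQ hh]
  rw [Nat.add_sub_cancel]
  exact (eq_inv_smul_iff₀ (Nat.cast_ne_zero.mpr hn.ne')).mpr hscaled

/-- Classical Lagrange inversion: if `h(x)` is the unique formal power series with `h(0)=0`
satisfying `h = x·Q(h)` for `Q` with invertible constant term, then for any `φ` with
`φ(0)=0` and all `n > 0`: `[x^n] φ(h(x)) = (1/n)·[t^{n-1}](φ'(t)·Q(t)^n)`. -/
theorem lagrange_inversion {R : Type*} [CommRing R] [Algebra ℚ R]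
    (Q φ h : PowerSeries R) (hQ : IsUnit (constantCoeff (R := R) Q))
    (h0 : constantCoeff (R := R) h = 0) (hh : h = X * pcomp Q h)
    (hφ : constantCoeff (R := R) φ = 0) :
    ∀ n : ℕ, 0 < n →
      coeff (R := R) n (pcomp φ h) =
        ((n : ℚ)⁻¹) • coeff (R := R) (n - 1) (PowerSeries.derivativeFun φ * Q ^ n) :=
  lagrange_inversion_general Q φ h hQ h0 hh
end
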